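/- In the transfinite construction over a full model N, for any variable x, any (unary) context C, and any ordinal α: (1) if t ≡ C[x] and t ↠_{≤α} t', then t' ≡ C'[x] for some context C' with C[t''] ↠_{≤α} C'[t''] for every term t''; (2) if C[x] ≻_α ρ then C[t] ≻_α ρ for every term t; (3) if C[x] ∼_α τ then C[t] ∼_α τ for every term t. -/

import Mathlib

/-! Infrastructure: the transfinite model construction over a full model of
classical higher-order logic, following Czajka, "A semantic approach to illative
combinatory logic", Section 4. -/

namespace ILM

/-- Type-free λ-terms over a set `C` of primitive constants (de Bruijn representation). -/
inductive Tm (C : Type) : Type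
  | var : Nat → Tm C
  | const : C → Tm C
  | app : Tm C → Tm C → Tm C
  | lam : Tm C → Tm C

namespace Tm

variable {C : Type}

/-- Renaming of free de Bruijn variables. -/
def rename (f : Nat → Nat) : Tm C → Tm C
  | .var n => .var (f n)
  | .const c => .const c
  | .app a b => .app (a.rename f) (b.rename f)
  | .lam a => .lam (a.rename fun n => match n with | 0 => 0 | m + 1 => f m + 1)

/-- Shift all free variables up by one. -/
def lift (t : Tm C) : Tm C := t.rename (· + 1)

/-- Simultaneous substitution. -/
def bind (σ : Nat → Tm C) : Tm C → Tm C
  | .var n => σ n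
  | .const c => .const c
  | .app a b => .app (a.bind σ) (b.bind σ)
  | .lam a => .lam (a.bind fun n => match n with | 0 => .var 0 | m + 1 => (σ m).lift)

/-- Substitution of `s` for the variable `0` (β-contraction of `(λ.t) s`). -/
def subst0 (t s : Tm C) : Tm C := t.bind fun n => match n with | 0 => s | m + 1 => .var m

end Tm

/-- Extended types `T⁺`: the constructors generate all expressions
`o | B | arr | ω | ε`; the grammar `T⁺ ::= T₁ | ω | ε`, `T₁ ::= T | T₁→T₁ | ω→T₁`
is captured by the predicate `IsT1` below. -/
inductive ETy (B : Type) : Type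
  | o : ETy B
  | base : B → ETy B
  | arr : ETy B → ETy B → ETy B
  | omega : ETy B
  | eps : ETy B
deriving DecidableEq

/-- Membership in `T₁` (so `T⁺ = T₁ ∪ {ω, ε}`). -/
inductive IsT1 {B : Type} : ETy B → Prop
  | o : IsT1 .o
  | base (b : B) : IsT1 (.base b)
  | arr {τ1 τ2 : ETy B} : IsT1 τ1 → IsT1 τ2 → IsT1 (.arr τ1 τ2)
  | omegaArr {τ2 : ETy B} : IsT1 τ2 → IsT1 (.arr .omega τ2)

/-- Membership in `T⁺`. -/
def IsTp {B : Type} (τ : ETy B) : Prop := IsT1 τ ∨ τ = .omega ∨ τ = .eps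

/-- The normalized arrow `τ₁ → τ₂`, implementing the notational conventions
`τ→ε = ε` (for `τ ≠ ε`), `ε→τ = ω` and `τ→ω = ω`. -/
def arrN {B : Type} : ETy B → ETy B → ETy B
  | _, .omega => .omega
  | .eps, _ => .omega
  | _, .eps => .eps
  | τ1, τ2 => .arr τ1 τ2

/-- The rank of a type. -/
def rank {B : Type} : ETy B → Nat
  | .arr τ1 τ2 => max (rank τ1 + 1) (rank τ2)
  | _ => 1

/-- A canonical system over domains `D` for the base types: the primitive
constants `Σ⁺ = {Ξ, L} ∪ {A_τ : τ ∈ B} ∪ ⋃_τ Σ_τ`, the sets `T_τ` of canonical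
terms of each type, the distinguished canonical constants `⊤, ⊥` of type `o`,
and the function `F` associating to each canonical term of a function type its
set-theoretic function, as constructed in the paper from a full model
`N = ⟨{D_τ}, I⟩` of classical higher-order logic.  The fields axiomatize the
construction: the sets of canonical terms of distinct types are disjoint sets of
closed normal terms (`T_ω` is the set of all terms, `T_ε = ∅`), for `τ₁ ≠ ω`
the canonical terms of type `τ₁→τ₂` are constants corresponding bijectively
(via `F`) to *all* set-theoretic functions from `T_{τ₁}` to `T_{τ₂}` (this is
where fullness of `N` enters), the canonical terms of type `ω→τ₂` are the terms
`λx.ρ` with `ρ ∈ T_{τ₂}` (with `F` giving constant functions), the canonical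
terms of base type `b` correspond bijectively to the domain `D b`, and those
of type `o` are exactly `⊤` and `⊥`. -/
structure CanSys (B : Type) (D : B → Type) where
  /-- the primitive constants `Σ⁺` -/
  C : Type
  cXi : C
  cL : C
  cA : B → C
  /-- the sets `T_τ` of canonical terms -/
  TT : ETy B → Set (Tm C)
  /-- the canonical constant `⊤ ∈ Σ_o` -/
  top : Tm C
  /-- the canonical constant `⊥ ∈ Σ_o` -/
  bot : Tm C
  /-- `F τ₁ τ₂ ρ t` : the value at `t ∈ T_{τ₁}` of the function associated with
  the canonical term `ρ ∈ T_{τ₁→τ₂}` -/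
  F : ETy B → ETy B → Tm C → Tm C → Tm C
  hXiL : cXi ≠ cL
  hXiA : ∀ b, cXi ≠ cA b
  hLA : ∀ b, cL ≠ cA b
  hAinj : Function.Injective cA
  TT_omega : TT .omega = Set.univ
  TT_eps : TT .eps = ∅
  TT_invalid : ∀ τ : ETy B, ¬ IsT1 τ → τ ≠ .omega → TT τ = ∅
  TT_o : TT .o = {top, bot}
  top_ne_bot : top ≠ bot
  TT_const : ∀ τ : ETy B, IsT1 τ → (∀ τ2, τ ≠ .arr .omega τ2) →
    ∀ t ∈ TT τ, ∃ c : C, t = .const c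
  TT_base_equiv : ∀ b : B, Nonempty (D b ≃ TT (.base b))
  TT_omega_arr : ∀ τ2 : ETy B, IsT1 τ2 → TT (.arr .omega τ2) = Tm.lam '' TT τ2
  F_omega : ∀ τ2 : ETy B, ∀ ρ ∈ TT τ2, ∀ t : Tm C, F .omega τ2 (.lam ρ) t = ρ
  F_mapsto : ∀ τ1 τ2 : ETy B, IsT1 (.arr τ1 τ2) →
    ∀ ρ ∈ TT (.arr τ1 τ2), ∀ t ∈ TT τ1, F τ1 τ2 ρ t ∈ TT τ2
  F_full : ∀ τ1 τ2 : ETy B, IsT1 (.arr τ1 τ2) → τ1 ≠ .omega →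
    ∀ g : Tm C → Tm C, (∀ t ∈ TT τ1, g t ∈ TT τ2) →
      ∃ ρ ∈ TT (.arr τ1 τ2), ∀ t ∈ TT τ1, F τ1 τ2 ρ t = g t
  F_inj : ∀ τ1 τ2 : ETy B, IsT1 (.arr τ1 τ2) → τ1 ≠ .omega →
    ∀ ρ ∈ TT (.arr τ1 τ2), ∀ ρ' ∈ TT (.arr τ1 τ2),
      (∀ t ∈ TT τ1, F τ1 τ2 ρ t = F τ1 τ2 ρ' t) → ρ = ρ'
  TT_disj : ∀ τ τ' : ETy B, τ ≠ τ' → τ ≠ .omega → τ' ≠ .omega →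
    Disjoint (TT τ) (TT τ')
  prim_notin : ∀ τ : ETy B, τ ≠ .omega →
    Tm.const cXi ∉ TT τ ∧ Tm.const cL ∉ TT τ ∧ ∀ b, Tm.const (cA b) ∉ TT τ
  cover : ∀ c : C, c = cXi ∨ c = cL ∨ (∃ b, c = cA b) ∨
    ∃ τ : ETy B, τ ≠ .omega ∧ Tm.const c ∈ TT τ

namespace CanSys

variable {B : Type} {D : B → Type} (S : CanSys B D)

/-- The term `Ξ`. -/
def XiT : Tm S.C := .const S.cXi

/-- The term `L`. -/
def LT : Tm S.C := .const S.cL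

/-- The term `A_b`. -/
def AT (b : B) : Tm S.C := .const (S.cA b)

/-- `K t = λx.t` with `x ∉ FV(t)`. -/
def Kt (t : Tm S.C) : Tm S.C := .lam t.lift

/-- `H t = L (K t)`. -/
def Ht (t : Tm S.C) : Tm S.C := .app S.LT (S.Kt t)

/-- The term `H = λx. L (K x)`. -/
def Hterm : Tm S.C := .lam (.app S.LT (.lam (.var 1)))

/-- `F t₁ t₂`, written out according to the notational convention:
`λf. Ξ t₁ (λx. t₂ (f x))` if `t₂` is not a λ-abstraction, and
`λf. Ξ t₁ (λx. q₂[z/(f x)])` if `t₂ = λz. q₂`. -/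
def Ft (t1 t2 : Tm S.C) : Tm S.C :=
  .lam (.app (.app S.XiT t1.lift)
    (match t2 with
     | .lam b => .lam (b.bind fun n => match n with
         | 0 => .app (.var 1) (.var 0)
         | m + 1 => .var (m + 2))
     | t2 => .lam (.app t2.lift.lift (.app (.var 1) (.var 0)))))

end CanSys


mutual
  /-- One-step reduction `→_{≤α}` of the reduction system `R_α`: the context
  closure of β- and η-reduction together with the rules `c t → F(c)(ρ₁)` for
  canonical constants `c ∈ Σ_{τ₁→τ₂}` (`τ₁ ≠ ω`) and `t ≻_{<α} ρ₁`. -/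
  inductive Step {B : Type} {D : B → Type} (S : CanSys B D) :
      Ordinal.{0} → Tm S.C → Tm S.C → Prop
    | beta (α : Ordinal.{0}) (t s : Tm S.C) : Step S α (.app (.lam t) s) (t.subst0 s)
    | eta (α : Ordinal.{0}) (t : Tm S.C) : Step S α (.lam (.app t.lift (.var 0))) t
    | crule {α γ : Ordinal.{0}} (hγ : γ < α) {τ1 τ2 : ETy B} (h1 : τ1 ≠ .omega)
        {c : Tm S.C} (hc : c ∈ S.TT (.arr τ1 τ2)) {ρ1 : Tm S.C} (hρ1 : ρ1 ∈ S.TT τ1)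
        {t : Tm S.C} (hs : Succ S γ t ρ1) :
        Step S α (.app c t) (S.F τ1 τ2 c ρ1)
    | appL {α : Ordinal.{0}} {t t' : Tm S.C} (s : Tm S.C) :
        Step S α t t' → Step S α (.app t s) (.app t' s)
    | appR (t : Tm S.C) {α : Ordinal.{0}} {s s' : Tm S.C} :
        Step S α s s' → Step S α (.app t s) (.app t s')
    | lam {α : Ordinal.{0}} {t t' : Tm S.C} :
        Step S α t t' → Step S α (.lam t) (.lam t')

  /-- Many-step reduction `↠_{≤α}` (the reflexive-transitive closure of `→_{≤α}`). -/
  inductive Steps {B : Type} {D : B → Type} (S : CanSys B D) :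
      Ordinal.{0} → Tm S.C → Tm S.C → Prop
    | refl (α : Ordinal.{0}) (t : Tm S.C) : Steps S α t t
    | tail {α : Ordinal.{0}} {t u v : Tm S.C} :
        Steps S α t u → Step S α u v → Steps S α t v

  /-- `t ⇝_α ρ` : `t ↠_{≤α} t' ≻_α ρ` for some `t'`. -/
  inductive Lead {B : Type} {D : B → Type} (S : CanSys B D) :
      Ordinal.{0} → Tm S.C → Tm S.C → Prop
    | mk {α : Ordinal.{0}} {t t' ρ : Tm S.C} :
        Steps S α t t' → Succ S α t' ρ → Lead S α t ρ

  /-- `t ⇝_{<α} ρ` : `t ⇝_γ ρ` for some `γ < α`. -/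
  inductive LeadLt {B : Type} {D : B → Type} (S : CanSys B D) :
      Ordinal.{0} → Tm S.C → Tm S.C → Prop
    | mk {α γ : Ordinal.{0}} {t ρ : Tm S.C} :
        γ < α → Lead S γ t ρ → LeadLt S α t ρ

  /-- The typing relation `t ∼_α τ` (Definition 4.4), by the rules
  (A), (H), (Kω), (Kε), (F) and (Fω). -/
  inductive Sim {B : Type} {D : B → Type} (S : CanSys B D) :
      Ordinal.{0} → Tm S.C → ETy B → Prop
    | ofA (α : Ordinal.{0}) (b : B) : Sim S α (S.AT b) (.base b)
    | ofH (α : Ordinal.{0}) : Sim S α S.Hterm .o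
    | ofKom {α : Ordinal.{0}} {t : Tm S.C} :
        LeadLt S α t S.top → Sim S α (S.Kt t) .omega
    | ofKeps {α : Ordinal.{0}} {t : Tm S.C} :
        LeadLt S α t S.bot → Sim S α (S.Kt t) .eps
    | ofF {α γ1 γ2 : Ordinal.{0}} (h1 : γ1 < α) (h2 : γ2 < α)
        {t1 t2 : Tm S.C} {τ1 τ2 : ETy B} :
        Sim S γ1 t1 τ1 → Sim S γ2 t2 τ2 → Sim S α (S.Ft t1 t2) (arrN τ1 τ2)
    | ofFom {α γ : Ordinal.{0}} (hγ : γ < α) {t1 t2 : Tm S.C} :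
        Sim S γ t1 .eps → Sim S α (S.Ft t1 t2) .omega

  /-- The relation `t ≻_α ρ` between terms and canonical terms (Definition 4.5). -/
  inductive Succ {B : Type} {D : B → Type} (S : CanSys B D) :
      Ordinal.{0} → Tm S.C → Tm S.C → Prop
    /- `ρ ≻_α ρ` for canonical `ρ` -/
    | refl {τ : ETy B} (hτ : τ ≠ .omega) {ρ : Tm S.C} (hρ : ρ ∈ S.TT τ)
        (α : Ordinal.{0}) : Succ S α ρ ρ
    /- `t ≻_α ρ` when `ρ` has canonical type `τ₁→τ₂` (possibly `τ₁ = ω`) and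
       `t t₁ ⇝_{<α} F(ρ)(t₁)` for all `t₁ ∈ T_{τ₁}` -/
    | fn {τ1 τ2 : ETy B} {ρ : Tm S.C} (hρ : ρ ∈ S.TT (.arr τ1 τ2))
        {α : Ordinal.{0}} {t : Tm S.C}
        (h : ∀ t1 ∈ S.TT τ1, LeadLt S α (.app t t1) (S.F τ1 τ2 ρ t1)) :
        Succ S α t ρ
    /- base postulates for `t ≻_α ⊤` -/
    | topLA (α : Ordinal.{0}) (b : B) : Succ S α (.app S.LT (S.AT b)) S.top
    | topLH (α : Ordinal.{0}) : Succ S α (.app S.LT S.Hterm) S.top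
    | topA {b : B} {c : Tm S.C} (hc : c ∈ S.TT (.base b)) (α : Ordinal.{0}) :
        Succ S α (.app (S.AT b) c) S.top
    | topH {c : Tm S.C} (hc : c = S.top ∨ c = S.bot) (α : Ordinal.{0}) :
        Succ S α (S.Ht c) S.top
    /- `(Ξ_i^⊤)` -/
    | xiTop {α : Ordinal.{0}} (hα : 0 < α) {t1 t2 : Tm S.C} {τ : ETy B}
        (h1 : Sim S α t1 τ) (h2 : ∀ t3 ∈ S.TT τ, LeadLt S α (.app t2 t3) S.top) :
        Succ S α (.app (.app S.XiT t1) t2) S.top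
    /- `(Ξ_H^⊤)` -/
    | xiHTop {α : Ordinal.{0}} (hα : 0 < α) {t1 t2 : Tm S.C} {τ : ETy B}
        (h1 : Sim S α t1 τ)
        (h2 : ∀ t3 ∈ S.TT τ, LeadLt S α (S.Ht (.app t2 t3)) S.top) :
        Succ S α (S.Ht (.app (.app S.XiT t1) t2)) S.top
    /- `(F_L^⊤)`, first case: `t₁ ∼_α ε` -/
    | flTopEps {α : Ordinal.{0}} (hα : 0 < α) {t1 t2 : Tm S.C}
        (h1 : Sim S α t1 .eps) :
        Succ S α (.app S.LT (S.Ft t1 t2)) S.top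
    /- `(F_L^⊤)`, second case: `t₁ ∼_α τ` for some `τ ≠ ε` and `L t₂ ⇝_{<α} ⊤` -/
    | flTop {α : Ordinal.{0}} (hα : 0 < α) {t1 t2 : Tm S.C} {τ : ETy B}
        (hτ : τ ≠ .eps) (h1 : Sim S α t1 τ) (h2 : LeadLt S α (.app S.LT t2) S.top) :
        Succ S α (.app S.LT (S.Ft t1 t2)) S.top
    /- `(H_i^⊤)` -/
    | hiTop {α : Ordinal.{0}} (hα : 0 < α) {t1 : Tm S.C} (h : LeadLt S α t1 S.top) :
        Succ S α (S.Ht t1) S.top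
    /- `(Ξ^⊥)` -/
    | xiBot {α : Ordinal.{0}} (hα : 0 < α) {t1 t2 : Tm S.C} {τ : ETy B}
        {γ : Ordinal.{0}} (hγ : γ < α)
        (hH : Succ S γ (S.Ht (.app (.app S.XiT t1) t2)) S.top)
        (h1 : Sim S α t1 τ) {t3 : Tm S.C} (h3 : t3 ∈ S.TT τ)
        (hb : LeadLt S α (.app t2 t3) S.bot) :
        Succ S α (.app (.app S.XiT t1) t2) S.bot
end


variable {B : Type} {D : B → Type}

/-- `t ≻ ρ` : the stable relation `≻_ζ` at the closure ordinal (by monotonicity,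
it equals the union of the `≻_α` over all ordinals `α`). -/
def SuccS (S : CanSys B D) (t ρ : Tm S.C) : Prop := ∃ α : Ordinal.{0}, Succ S α t ρ

/-- `t ∼ τ` : the stable typing relation. -/
def SimS (S : CanSys B D) (t : Tm S.C) (τ : ETy B) : Prop := ∃ α : Ordinal.{0}, Sim S α t τ

/-- One-step reduction of the stable reduction system `R`. -/
def StepR (S : CanSys B D) (t t' : Tm S.C) : Prop := ∃ α : Ordinal.{0}, Step S α t t'

/-- `t ↠_R t'` : many-step reduction in the stable reduction system `R`. -/
def StepsR (S : CanSys B D) : Tm S.C → Tm S.C → Prop := Relation.ReflTransGen (StepR S)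

/-- `t ⇝ ρ` : the stable relation `⇝_ζ`. -/
def LeadR (S : CanSys B D) (t ρ : Tm S.C) : Prop :=
  ∃ t', StepsR S t t' ∧ SuccS S t' ρ

/-- `t =_{≤α} t'` : convertibility in `R_α`. -/
def ConvLe (S : CanSys B D) (α : Ordinal.{0}) : Tm S.C → Tm S.C → Prop :=
  Relation.EqvGen (Step S α)

/-- `t =_R t'` : convertibility in the stable reduction system `R`. -/
def ConvR (S : CanSys B D) : Tm S.C → Tm S.C → Prop :=
  Relation.EqvGen (StepR S)

/-- Filling the boxes `□₁, …, □ₖ` of a `k`-ary context (a λ-term over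
`Σ⁺ ∪ {□₁, …, □ₖ}`) with terms, in such a way that the free variables of the
inserted terms do not become bound. -/
def fillk {C : Type} {k : Nat} (ts : Fin k → Tm C) : Tm (Fin k ⊕ C) → Tm C
  | .var n => .var n
  | .const (.inl i) => ts i
  | .const (.inr c) => .const c
  | .app a b => .app (fillk ts a) (fillk ts b)
  | .lam a => .lam (fillk (fun i => (ts i).lift) a)

/-- Filling a unary context. -/
def fill1 {C : Type} (Ctx : Tm (Fin 1 ⊕ C)) (t : Tm C) : Tm C :=
  fillk (fun _ => t) Ctx

/-- `t ≫^n t'` (at the stable level): there are a `k`-ary context `Cx`, terms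
`t₁, …, t_k` and canonical terms `ρ₁, …, ρ_k` of ranks `≤ n` with `tᵢ ≻ ρᵢ`,
`t = Cx[t₁,…,t_k]` and `t' = Cx[ρ₁,…,ρ_k]`. -/
def Gg (S : CanSys B D) (n : Nat) (t t' : Tm S.C) : Prop :=
  ∃ (k : Nat) (Cx : Tm (Fin k ⊕ S.C)) (ts ρs : Fin k → Tm S.C),
    (∀ i, SuccS S (ts i) (ρs i)) ∧
    (∀ i, ∃ τ : ETy B, τ ≠ .omega ∧ ρs i ∈ S.TT τ ∧ rank τ ≤ n) ∧
    t = fillk ts Cx ∧ t' = fillk ρs Cx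

/-!
No rule generating `→_{≤α}`, `≻_α` or `∼_α` can fire on a bare variable: a variable is neither a
redex, nor canonical, nor of one of the shapes `A_b`, `H`, `K t`, `F t₁ t₂`, `Ξ t₁ t₂`, `L t` that
the rules match. So a derivation about `C[x]` replays for `C[t]`, by induction on `α` and on the
derivation. Every premise is about a subterm of `C[x]`, which is again `C'[x]` for a subcontext
`C'` (after undoing the shifts and the substitution hidden in `K` and `F`), or lives at a smaller
ordinal: (1) at `α` uses (2) below `α`, (3) at `α` uses (1)–(3) below `α`, and (2) at `α` uses
(3) at `α` and (1), (2) below `α`. The one delicate point is the convention for `F t₁ t₂`, which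
depends on whether `t₂` is an abstraction; when `t₂` is `x` itself we use `F t₁ (λz. x z)`,
which η-reduces to the original.
-/

namespace Tm

variable {C : Type}

theorem rename_rename : ∀ (t : Tm C) (f g : ℕ → ℕ),
    (t.rename f).rename g = t.rename (fun n => g (f n))
  | .var _, _, _ => rfl
  | .const _, _, _ => rfl
  | .app a b, f, g => by simp only [rename, rename_rename]
  | .lam a, f, g => by
      simp only [rename, rename_rename]
      exact congrArg lam (congrArg (rename · a) (by funext n; cases n <;> rfl))

theorem bind_rename : ∀ (t : Tm C) (f : ℕ → ℕ) (σ : ℕ → Tm C),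
    (t.rename f).bind σ = t.bind (fun n => σ (f n))
  | .var _, _, _ => rfl
  | .const _, _, _ => rfl
  | .app a b, f, σ => by simp only [rename, bind, bind_rename]
  | .lam a, f, σ => by
      simp only [rename, bind, bind_rename]
      exact congrArg lam (congrArg (bind · a) (by funext n; cases n <;> rfl))

theorem rename_bind : ∀ (t : Tm C) (σ : ℕ → Tm C) (f : ℕ → ℕ),
    (t.bind σ).rename f = t.bind (fun n => (σ n).rename f)
  | .var _, _, _ => rfl
  | .const _, _, _ => rfl
  | .app a b, σ, f => by simp only [rename, bind, rename_bind]
  | .lam a, σ, f => by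
      simp only [rename, bind, rename_bind]
      refine congrArg lam (congrArg (bind · a) (funext fun n => ?_))
      cases n with
      | zero => rfl
      | succ m => simp only [lift, rename_rename]

theorem rename_eq_bind : ∀ (t : Tm C) (f : ℕ → ℕ), t.rename f = t.bind (fun n => .var (f n))
  | .var _, _ => rfl
  | .const _, _ => rfl
  | .app a b, f => by simp only [rename, bind, ← rename_eq_bind]
  | .lam a, f => by
      simp only [rename, bind, rename_eq_bind a]
      exact congrArg lam (congrArg (bind · a) (by funext n; cases n <;> rfl))

theorem bind_var (t : Tm C) : t.bind .var = t := by
  induction t with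
  | var => rfl
  | const => rfl
  | app a b iha ihb => simp only [bind, iha, ihb]
  | lam a iha =>
      refine congrArg lam (Eq.trans (congrArg (bind · a) (funext fun n => ?_)) iha)
      cases n <;> rfl

def up (σ : ℕ → Tm C) : ℕ → Tm C
  | 0 => .var 0
  | m + 1 => (σ m).lift

@[simp] theorem bind_lam (a : Tm C) (σ : ℕ → Tm C) : (lam a).bind σ = .lam (a.bind (up σ)) :=
  rfl

theorem lift_bind (t : Tm C) (σ : ℕ → Tm C) : (t.bind σ).lift = t.lift.bind (up σ) := by
  rw [lift, lift, rename_bind, bind_rename]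
  rfl

theorem lift_eq_bind (t : Tm C) : t.lift = t.bind (fun n => .var (n + 1)) :=
  rename_eq_bind t _

@[simp] theorem lift_var (n : ℕ) : (var n : Tm C).lift = .var (n + 1) := rfl

theorem eq_var_of_lift_eq_var {t : Tm C} {k : ℕ} (h : t.lift = .var (k + 1)) : t = .var k := by
  cases t <;> first | cases h; rfl | cases h

end Tm

section Contexts

variable {C : Type}

@[simp] theorem fill1_var (n : ℕ) (s : Tm C) : fill1 (.var n) s = .var n := rfl
@[simp] theorem fill1_box (i : Fin 1) (s : Tm C) : fill1 (.const (.inl i)) s = s := rfl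
@[simp] theorem fill1_const (c : C) (s : Tm C) : fill1 (.const (.inr c)) s = .const c := rfl
@[simp] theorem fill1_app (a b : Tm (Fin 1 ⊕ C)) (s : Tm C) :
    fill1 (.app a b) s = .app (fill1 a s) (fill1 b s) := rfl
@[simp] theorem fill1_lam (a : Tm (Fin 1 ⊕ C)) (s : Tm C) :
    fill1 (.lam a) s = .lam (fill1 a s.lift) := rfl

def embedC : Tm C → Tm (Fin 1 ⊕ C)
  | .var n => .var n
  | .const c => .const (.inr c)
  | .app a b => .app (embedC a) (embedC b)
  | .lam a => .lam (embedC a)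

@[simp] theorem fill1_embedC : ∀ (u s : Tm C), fill1 (embedC u) s = u
  | .var _, _ => rfl
  | .const _, _ => rfl
  | .app a b, s => by simp [embedC, fill1_embedC]
  | .lam a, s => by simp [embedC, fill1_embedC]

theorem fill1_rename : ∀ (Cx : Tm (Fin 1 ⊕ C)) (f : ℕ → ℕ) (s : Tm C),
    fill1 (Cx.rename f) (s.rename f) = (fill1 Cx s).rename f
  | .var _, _, _ => rfl
  | .const (.inl _), _, _ => rfl
  | .const (.inr _), _, _ => rfl
  | .app a b, f, s => by simp only [Tm.rename, fill1_app, fill1_rename]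
  | .lam a, f, s => by
      simp only [Tm.rename, fill1_lam]
      rw [← fill1_rename a _ s.lift]
      simp only [Tm.lift, Tm.rename_rename]

theorem fill1_bind : ∀ (Cx : Tm (Fin 1 ⊕ C)) {σc : ℕ → Tm (Fin 1 ⊕ C)} {σ : ℕ → Tm C}
    {s s' : Tm C}, (∀ m, fill1 (σc m) s = σ m) → s'.bind σ = s →
    fill1 (Cx.bind σc) s = (fill1 Cx s').bind σ
  | .var m, _, _, _, _, hσ, _ => hσ m
  | .const (.inl _), _, _, _, _, _, hs => hs.symm
  | .const (.inr _), _, _, _, _, _, _ => rfl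
  | .app a b, _, _, _, _, hσ, hs => by
      simp only [Tm.bind, fill1_app, fill1_bind a hσ hs, fill1_bind b hσ hs]
  | .lam a, σc, σ, s, s', hσ, hs => by
      simp only [Tm.bind_lam, fill1_lam]
      refine congrArg Tm.lam (fill1_bind a (fun m => ?_) (by rw [← Tm.lift_bind, hs]))
      cases m with
      | zero => rfl
      | succ k =>
          change fill1 (σc k).lift s.lift = (σ k).lift
          rw [Tm.lift, Tm.lift, fill1_rename, hσ k]
          rfl

theorem fill1_subst0 (Ca Cb : Tm (Fin 1 ⊕ C)) (s : Tm C) :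
    fill1 (Ca.subst0 Cb) s = (fill1 Ca s.lift).subst0 (fill1 Cb s) := by
  refine fill1_bind Ca (fun m => ?_) ?_
  · cases m <;> rfl
  · rw [Tm.lift, Tm.bind_rename]
    exact Tm.bind_var s

def ClosedAt : ℕ → Tm C → Prop
  | d, .var n => n < d
  | _, .const _ => True
  | d, .app a b => ClosedAt d a ∧ ClosedAt d b
  | d, .lam a => ClosedAt (d + 1) a

theorem ClosedAt.rename {t : Tm C} {d e : ℕ} {f : ℕ → ℕ} (hf : ∀ m < d, f m < e)
    (h : ClosedAt d t) : ClosedAt e (t.rename f) := by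
  induction t generalizing d e f with
  | var n => exact hf n h
  | const => trivial
  | app a b iha ihb => exact ⟨iha hf h.1, ihb hf h.2⟩
  | lam a iha => exact iha (fun m hm => by cases m <;> simp_all [ClosedAt]) h

theorem ClosedAt.lift {t : Tm C} {d : ℕ} (h : ClosedAt d t) : ClosedAt (d + 1) t.lift :=
  h.rename fun _ hm => Nat.succ_lt_succ hm

theorem fill1_eq_of_closedAt : ∀ {Cx : Tm (Fin 1 ⊕ C)} {d n : ℕ}, d ≤ n →
    ClosedAt d (fill1 Cx (.var n)) → ∀ s, fill1 Cx s = fill1 Cx (.var n)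
  | .var _, _, _, _, _, _ => rfl
  | .const (.inl _), _, _, hdn, h, _ => absurd h (by simp [ClosedAt]; omega)
  | .const (.inr _), _, _, _, _, _ => rfl
  | .app a b, _, _, hdn, h, s => by
      simp only [fill1_app] at h ⊢
      rw [fill1_eq_of_closedAt hdn h.1 s, fill1_eq_of_closedAt hdn h.2 s]
  | .lam a, _, _, hdn, h, s => by
      simp only [fill1_lam, Tm.lift_var] at h ⊢
      rw [fill1_eq_of_closedAt (Nat.succ_le_succ hdn) h s.lift]

theorem fill1_eq_const {Cx : Tm (Fin 1 ⊕ C)} {x : ℕ} {c : C}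
    (h : fill1 Cx (.var x) = .const c) (s : Tm C) : fill1 Cx s = .const c := by
  rw [fill1_eq_of_closedAt (Nat.zero_le x) (by rw [h]; trivial) s, h]

theorem fill1_eq_var {Cx : Tm (Fin 1 ⊕ C)} {n k : ℕ} (h : fill1 Cx (.var n) = .var k) :
    (∃ i, Cx = .const (.inl i)) ∨ Cx = .var k := by
  rcases Cx with _ | (i | _) | _ | _
  · exact Or.inr (by simpa using h)
  · exact Or.inl ⟨i, rfl⟩
  all_goals cases h

theorem fill1_eq_app {Cx : Tm (Fin 1 ⊕ C)} {x : ℕ} {a b : Tm C}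
    (h : fill1 Cx (.var x) = .app a b) :
    ∃ C1 C2, Cx = .app C1 C2 ∧ fill1 C1 (.var x) = a ∧ fill1 C2 (.var x) = b := by
  rcases Cx with _ | (_ | _) | ⟨C1, C2⟩ | _
  case app => exact ⟨C1, C2, rfl, Tm.app.inj h⟩
  all_goals cases h

theorem fill1_eq_lam {Cx : Tm (Fin 1 ⊕ C)} {x : ℕ} {a : Tm C}
    (h : fill1 Cx (.var x) = .lam a) : ∃ C1, Cx = .lam C1 ∧ fill1 C1 (.var (x + 1)) = a := by
  rcases Cx with _ | (_ | _) | _ | C1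
  case lam => exact ⟨C1, rfl, Tm.lam.inj h⟩
  all_goals cases h

theorem fill1_eq_const_app {Cx : Tm (Fin 1 ⊕ C)} {x : ℕ} {c : C} {t : Tm C}
    (h : fill1 Cx (.var x) = .app (.const c) t) :
    ∃ C1, fill1 C1 (.var x) = t ∧ ∀ s, fill1 Cx s = .app (.const c) (fill1 C1 s) := by
  obtain ⟨C0, C1, rfl, h0, h1⟩ := fill1_eq_app h
  exact ⟨C1, h1, fun s => by rw [fill1_app, fill1_eq_const h0]⟩

theorem fill1_ne_lam {Cx : Tm (Fin 1 ⊕ C)} (hbox : ¬ ∃ i, Cx = .const (.inl i)) {t : Tm C}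
    (h : ∀ b, fill1 Cx t ≠ .lam b) (s : Tm C) : ∀ b, fill1 Cx s ≠ .lam b := by
  rcases Cx with _ | (i | _) | _ | a
  · simp
  · exact absurd ⟨i, rfl⟩ hbox
  · simp
  · simp
  · exact absurd rfl (h _)

/-- Under these conditions, in `Cx[n] = u[σ]` every occurrence of `n` filled into a box of `Cx`
comes from an occurrence of `x` in `u`, so `Cx` can be pulled back along `σ`. -/
structure InvertibleAt (σ : ℕ → Tm C) (x n : ℕ) : Prop where
  apply_self : σ x = .var n
  eq_of_apply_eq : ∀ m, σ m = .var n → m = x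
  var_or_closedAt : ∀ m, (∃ k, σ m = .var k) ∨ ClosedAt n (σ m)

theorem InvertibleAt.up {σ : ℕ → Tm C} {x n : ℕ} (hσ : InvertibleAt σ x n) :
    InvertibleAt (Tm.up σ) (x + 1) (n + 1) where
  apply_self := by simp only [Tm.up, hσ.apply_self, Tm.lift_var]
  eq_of_apply_eq
    | 0, h => by cases h
    | m + 1, h => congrArg (· + 1) (hσ.eq_of_apply_eq m (Tm.eq_var_of_lift_eq_var h))
  var_or_closedAt
    | 0 => Or.inl ⟨0, rfl⟩
    | m + 1 => (hσ.var_or_closedAt m).imp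
        (fun ⟨k, hk⟩ => ⟨k + 1, show (σ m).lift = _ by rw [hk]; rfl⟩) ClosedAt.lift

theorem exists_fill1_eq_of_fill1_const {Cx : Tm (Fin 1 ⊕ C)} {σ : ℕ → Tm C} {x n : ℕ}
    {u : Tm C} (h : fill1 Cx (.var n) = u.bind σ) (hCx : ∀ s, fill1 Cx s = fill1 Cx (.var n)) :
    ∃ C0, fill1 C0 (.var x) = u ∧ ∀ s, fill1 Cx (s.bind σ) = (fill1 C0 s).bind σ :=
  ⟨embedC u, fill1_embedC u _, fun s => (hCx _).trans (h.trans (by rw [fill1_embedC]))⟩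

theorem InvertibleAt.exists_fill1_eq {σ : ℕ → Tm C} {x n : ℕ} (hσ : InvertibleAt σ x n)
    (u : Tm C) {Cx : Tm (Fin 1 ⊕ C)} (h : fill1 Cx (.var n) = u.bind σ) :
    ∃ C0, fill1 C0 (.var x) = u ∧ ∀ s, fill1 Cx (s.bind σ) = (fill1 C0 s).bind σ := by
  induction u generalizing σ x n Cx with
  | var m =>
      rcases hσ.var_or_closedAt m with ⟨k, hk⟩ | hcl
      · have hnk : fill1 Cx (.var n) = .var k := h.trans hk
        rcases fill1_eq_var hnk with ⟨i, rfl⟩ | rfl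
        · obtain rfl : n = k := by simpa using hnk
          obtain rfl := hσ.eq_of_apply_eq m hk
          exact ⟨.const (.inl i), rfl, fun s => rfl⟩
        · exact exists_fill1_eq_of_fill1_const h fun _ => rfl
      · exact exists_fill1_eq_of_fill1_const h
          (fill1_eq_of_closedAt le_rfl (h ▸ hcl))
  | const c =>
      exact exists_fill1_eq_of_fill1_const h
        (fill1_eq_of_closedAt (Nat.zero_le n) (by rw [h]; trivial))
  | app a b iha ihb =>
      obtain ⟨C1, C2, rfl, h1, h2⟩ := fill1_eq_app h
      obtain ⟨D1, hD1, hs1⟩ := iha hσ h1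
      obtain ⟨D2, hD2, hs2⟩ := ihb hσ h2
      exact ⟨.app D1 D2, by simp [hD1, hD2], fun s => by simp only [fill1_app, hs1, hs2]; rfl⟩
  | lam a iha =>
      obtain ⟨C1, rfl, h1⟩ := fill1_eq_lam h
      obtain ⟨C0, h0, hs⟩ := iha hσ.up h1
      exact ⟨.lam C0, by simp [h0], fun s => by simp only [fill1_lam, Tm.lift_bind, hs]; rfl⟩

theorem fill1_eq_lift {Cx : Tm (Fin 1 ⊕ C)} {x : ℕ} {u : Tm C}
    (h : fill1 Cx (.var (x + 1)) = u.lift) :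
    ∃ C0, fill1 C0 (.var x) = u ∧ ∀ s, fill1 Cx s.lift = (fill1 C0 s).lift := by
  have hσ : InvertibleAt (fun m => (.var (m + 1) : Tm C)) x (x + 1) :=
    ⟨rfl, fun _ h => by cases h; rfl, fun m => Or.inl ⟨m + 1, rfl⟩⟩
  simpa only [← Tm.lift_eq_bind] using hσ.exists_fill1_eq u (h.trans (Tm.lift_eq_bind u))

end Contexts

section Patterns

variable {B : Type} {D : B → Type} (S : CanSys B D)

theorem not_isT1_omega : ¬ IsT1 (.omega : ETy B) := nofun

theorem mem_TT_shape {τ : ETy B} (hτ : τ ≠ .omega) {ρ : Tm S.C} (hρ : ρ ∈ S.TT τ) :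
    (∃ c, ρ = .const c) ∨ ∃ ρ' τ', ρ = .lam ρ' ∧ ρ' ∈ S.TT τ' ∧ τ' ≠ .omega := by
  by_cases hT1 : IsT1 τ
  swap
  · rw [S.TT_invalid τ hT1 hτ] at hρ
    exact absurd hρ (Set.notMem_empty ρ)
  by_cases hω : ∃ τ', τ = .arr .omega τ'
  · obtain ⟨τ', rfl⟩ := hω
    have hτ' : IsT1 τ' := by
      cases hT1 with
      | arr h _ => exact absurd h not_isT1_omega
      | omegaArr h => exact h
    rw [S.TT_omega_arr τ' hτ'] at hρ
    obtain ⟨ρ', hρ', rfl⟩ := hρ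
    exact Or.inr ⟨ρ', τ', rfl, hρ', fun h => not_isT1_omega (h ▸ hτ')⟩
  · simp only [not_exists] at hω
    exact Or.inl (S.TT_const τ hT1 hω ρ hρ)

theorem closedAt_of_mem_TT {τ : ETy B} (hτ : τ ≠ .omega) {ρ : Tm S.C} (hρ : ρ ∈ S.TT τ)
    (d : ℕ) : ClosedAt d ρ := by
  induction ρ generalizing τ d with
  | lam a iha =>
      obtain ⟨c, hc⟩ | ⟨ρ', τ', hρ', hmem, hτ'⟩ := mem_TT_shape S hτ hρ
      · cases hc
      · cases hρ'
        exact iha hτ' hmem (d + 1)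
  | const => trivial
  | _ => obtain ⟨c, hc⟩ | ⟨_, _, hc, _⟩ := mem_TT_shape S hτ hρ <;> cases hc

theorem not_sim_var {α : Ordinal.{0}} {n : ℕ} {τ : ETy B} : ¬ Sim S α (.var n) τ := nofun

def ftSubst {C : Type} : ℕ → Tm C
  | 0 => .app (.var 1) (.var 0)
  | m + 1 => .var (m + 2)

theorem invertibleAt_ftSubst {C : Type} (x : ℕ) :
    InvertibleAt (ftSubst : ℕ → Tm C) (x + 1) (x + 2) where
  apply_self := rfl
  eq_of_apply_eq
    | 0, h => by cases h
    | _ + 1, h => by cases h; rfl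
  var_or_closedAt
    | 0 => Or.inr ⟨by simp [ClosedAt], by simp [ClosedAt]⟩
    | m + 1 => Or.inl ⟨m + 2, rfl⟩

theorem lift_bind_ftSubst {C : Type} (t : Tm C) : t.lift.bind ftSubst = t.lift.lift := by
  rw [Tm.lift, Tm.bind_rename, Tm.lift, Tm.rename_rename, Tm.rename_eq_bind]
  rfl

/-- The branch `λf. Ξ t₁ (λx. t₂ (f x))` of the convention `F t₁ t₂`. -/
def CanSys.FtApp (t1 t2 : Tm S.C) : Tm S.C :=
  .lam (.app (.app S.XiT t1.lift) (.lam (.app t2.lift.lift (.app (.var 1) (.var 0)))))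

theorem Ft_lam (t1 b : Tm S.C) :
    S.Ft t1 (.lam b) = .lam (.app (.app S.XiT t1.lift) (.lam (b.bind ftSubst))) := rfl

theorem Ft_of_ne_lam {t1 t2 : Tm S.C} (h : ∀ b, t2 ≠ .lam b) : S.Ft t1 t2 = S.FtApp t1 t2 := by
  cases t2
  case lam b => exact absurd rfl (h b)
  all_goals rfl

theorem Ft_eta (t1 w : Tm S.C) : S.Ft t1 (.lam (.app w.lift (.var 0))) = S.FtApp t1 w := by
  rw [Ft_lam]
  change Tm.lam (.app _ (.lam (.app (w.lift.bind ftSubst) _))) = _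
  rw [lift_bind_ftSubst]
  rfl

variable {S}

theorem fill1_eq_xi {Cx : Tm (Fin 1 ⊕ S.C)} {x : ℕ} {t1 t2 : Tm S.C}
    (h : fill1 Cx (.var x) = .app (.app S.XiT t1) t2) :
    ∃ C1 C2, fill1 C1 (.var x) = t1 ∧ fill1 C2 (.var x) = t2 ∧
      ∀ s, fill1 Cx s = .app (.app S.XiT (fill1 C1 s)) (fill1 C2 s) := by
  obtain ⟨CA, C2, rfl, hA, h2⟩ := fill1_eq_app h
  obtain ⟨C1, h1, hs⟩ := fill1_eq_const_app hA
  exact ⟨C1, C2, h1, h2, fun s => by rw [fill1_app, hs]; rfl⟩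

theorem fill1_eq_Kt {Cx : Tm (Fin 1 ⊕ S.C)} {x : ℕ} {u : Tm S.C}
    (h : fill1 Cx (.var x) = S.Kt u) :
    ∃ C0, fill1 C0 (.var x) = u ∧ ∀ s, fill1 Cx s = S.Kt (fill1 C0 s) := by
  obtain ⟨C1, rfl, h1⟩ := fill1_eq_lam h
  obtain ⟨C0, h0, hs⟩ := fill1_eq_lift h1
  exact ⟨C0, h0, fun s => congrArg Tm.lam (hs s)⟩

theorem fill1_eq_Ht {Cx : Tm (Fin 1 ⊕ S.C)} {x : ℕ} {u : Tm S.C}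
    (h : fill1 Cx (.var x) = S.Ht u) :
    ∃ C0, fill1 C0 (.var x) = u ∧ ∀ s, fill1 Cx s = S.Ht (fill1 C0 s) := by
  obtain ⟨CK, hK, hs⟩ := fill1_eq_const_app h
  obtain ⟨C0, h0, hs0⟩ := fill1_eq_Kt hK
  exact ⟨C0, h0, fun s => by rw [hs, hs0]; rfl⟩

variable (S) in
def CanSys.HtCtx (E : Tm (Fin 1 ⊕ S.C)) : Tm (Fin 1 ⊕ S.C) :=
  .app (.const (.inr S.cL)) (.lam (E.rename (· + 1)))

theorem fill1_HtCtx (E : Tm (Fin 1 ⊕ S.C)) (s : Tm S.C) :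
    fill1 (S.HtCtx E) s = S.Ht (fill1 E s) := by
  simp only [CanSys.HtCtx, fill1_app, fill1_const, fill1_lam]
  rw [Tm.lift, fill1_rename]
  rfl

theorem fill1_eq_lam_xi_lift {Cx : Tm (Fin 1 ⊕ S.C)} {x : ℕ} {t1 M : Tm S.C}
    (h : fill1 Cx (.var x) = .lam (.app (.app S.XiT t1.lift) M)) :
    ∃ C1 CM, fill1 C1 (.var x) = t1 ∧ fill1 CM (.var (x + 1)) = M ∧
      ∀ s, fill1 Cx s = .lam (.app (.app S.XiT (fill1 C1 s).lift) (fill1 CM s.lift)) := by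
  obtain ⟨Cb, rfl, hb⟩ := fill1_eq_lam h
  obtain ⟨C1', CM, h1', hM, hs⟩ := fill1_eq_xi hb
  obtain ⟨C1, h1, hs1⟩ := fill1_eq_lift h1'
  exact ⟨C1, CM, h1, hM, fun s => by rw [fill1_lam, hs, hs1]⟩

theorem fill1_eq_Ft {Cx : Tm (Fin 1 ⊕ S.C)} {x : ℕ} {t1 t2 : Tm S.C}
    (h : fill1 Cx (.var x) = S.Ft t1 t2) :
    ∃ C1 C2, fill1 C1 (.var x) = t1 ∧ (∀ s, fill1 Cx s = S.Ft (fill1 C1 s) (fill1 C2 s)) ∧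
      (fill1 C2 (.var x) = t2 ∨ t2 = .var x ∧ ∀ s γ, Step S γ (fill1 C2 s) s) := by
  by_cases hlam : ∃ b, t2 = .lam b
  · obtain ⟨b, rfl⟩ := hlam
    rw [Ft_lam] at h
    obtain ⟨C1, CM, h1, hM, hs⟩ := fill1_eq_lam_xi_lift h
    obtain ⟨Cb', rfl, hb'⟩ := fill1_eq_lam hM
    obtain ⟨Cb, hb, hsb⟩ := (invertibleAt_ftSubst x).exists_fill1_eq b hb'
    refine ⟨C1, .lam Cb, h1, fun s => ?_, Or.inl (by simp [hb])⟩
    rw [hs, fill1_lam, fill1_lam, ← lift_bind_ftSubst, hsb, Ft_lam]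
  simp only [not_exists] at hlam
  rw [Ft_of_ne_lam S hlam] at h
  obtain ⟨C1, CM, h1, hM, hs⟩ := fill1_eq_lam_xi_lift h
  obtain ⟨CM', rfl, hM'⟩ := fill1_eq_lam hM
  obtain ⟨C2'', Cv, rfl, h2'', hv⟩ := fill1_eq_app hM'
  obtain ⟨C2', h2', hs2'⟩ := fill1_eq_lift h2''
  obtain ⟨C0, h0, hs0⟩ := fill1_eq_lift h2'
  have hCv : ∀ s, fill1 Cv s = .app (.var 1) (.var 0) := fun s => by
    rw [fill1_eq_of_closedAt (d := 2) (by omega : 2 ≤ x + 1 + 1) (by rw [hv]; simp [ClosedAt]),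
      hv]
  have hCx : ∀ s, fill1 Cx s = S.FtApp (fill1 C1 s) (fill1 C0 s) := fun s => by
    rw [hs, fill1_lam, fill1_app, hs2', hs0, hCv]
    rfl
  by_cases hbox : ∃ i, C0 = .const (.inl i)
  · -- `t₂ = x`: filling `F t₁ x` with an abstraction would switch branches; use `F t₁ (λz. x z)`
    obtain ⟨i, rfl⟩ := hbox
    refine ⟨C1, .lam (.app (.const (.inl i)) (.var 0)), h1, fun s => ?_,
      Or.inr ⟨h0.symm, fun s γ => Step.eta γ s⟩⟩
    simp only [hCx, fill1_lam, fill1_app, fill1_box, fill1_var, Ft_eta]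
  · exact ⟨C1, C0, h1, fun s => by rw [hCx, Ft_of_ne_lam S (fill1_ne_lam hbox (h0 ▸ hlam) s)],
      Or.inl h0⟩

end Patterns

section Transport

variable {B : Type} {D : B → Type} (S : CanSys B D)

def SuccTransport (α : Ordinal.{0}) : Prop :=
  ∀ (x : ℕ) (Cx : Tm (Fin 1 ⊕ S.C)) (ρ : Tm S.C),
    Succ S α (fill1 Cx (.var x)) ρ → ∀ t, Succ S α (fill1 Cx t) ρ

def SimTransport (α : Ordinal.{0}) : Prop :=
  ∀ (x : ℕ) (Cx : Tm (Fin 1 ⊕ S.C)) (τ : ETy B),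
    Sim S α (fill1 Cx (.var x)) τ → ∀ t, Sim S α (fill1 Cx t) τ

variable {S} {α : Ordinal.{0}}

theorem Step.steps_head {a b : Tm S.C} (hab : Step S α a b) :
    ∀ {c}, Steps S α b c → Steps S α a c
  | _, .refl _ _ => .tail (.refl _ _) hab
  | _, .tail hbc hc => .tail (hab.steps_head hbc) hc

theorem LeadLt.head {a b ρ : Tm S.C} (hab : ∀ γ, Step S γ a b) (h : LeadLt S α b ρ) :
    LeadLt S α a ρ := by
  obtain ⟨hγ, ⟨hsteps, hρ⟩⟩ := h
  exact ⟨hγ, ⟨(hab _).steps_head hsteps, hρ⟩⟩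

theorem step_transport (hSucc : ∀ γ < α, SuccTransport S γ) :
    ∀ {u v : Tm S.C}, Step S α u v → ∀ {x : ℕ} {Cx : Tm (Fin 1 ⊕ S.C)},
      fill1 Cx (.var x) = u →
      ∃ Cx', v = fill1 Cx' (.var x) ∧ ∀ t, Step S α (fill1 Cx t) (fill1 Cx' t)
  | _, _, .beta _ _ _, _, _, hf => by
      obtain ⟨CL, Cs, rfl, hL, rfl⟩ := fill1_eq_app hf
      obtain ⟨Ca, rfl, rfl⟩ := fill1_eq_lam hL
      refine ⟨Ca.subst0 Cs, (fill1_subst0 ..).symm, fun t => ?_⟩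
      rw [fill1_app, fill1_lam, fill1_subst0]
      exact .beta ..
  | _, _, .eta _ w, x, _, hf => by
      obtain ⟨C1, rfl, h1⟩ := fill1_eq_lam hf
      obtain ⟨Cw, C0, rfl, hw, h0⟩ := fill1_eq_app h1
      obtain ⟨Cw', hw', hs⟩ := fill1_eq_lift hw
      have hC0 : ∀ s, fill1 C0 s = .var 0 := fun s => by
        rw [fill1_eq_of_closedAt (d := 1) (by omega : 1 ≤ x + 1) (by rw [h0]; simp [ClosedAt]), h0]
      exact ⟨Cw', hw'.symm, fun t => by simp only [fill1_lam, fill1_app, hs, hC0]; exact .eta ..⟩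
  | _, _, .crule hγ h1 hc hρ1 hs, x, _, hf => by
      obtain ⟨Cc, Ct, rfl, hCc, rfl⟩ := fill1_eq_app hf
      have hc' := fill1_eq_of_closedAt (Nat.zero_le x)
        (by rw [hCc]; exact closedAt_of_mem_TT S (by nofun) hc 0)
      refine ⟨embedC _, (fill1_embedC ..).symm, fun t => ?_⟩
      rw [fill1_app, hc', hCc, fill1_embedC]
      exact .crule hγ h1 hc hρ1 (hSucc _ hγ x Ct _ hs t)
  | _, _, .appL _ h, _, _, hf => by
      obtain ⟨C1, C2, rfl, h1, rfl⟩ := fill1_eq_app hf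
      obtain ⟨C1', rfl, hs⟩ := step_transport hSucc h h1
      exact ⟨.app C1' C2, rfl, fun t => .appL _ (hs t)⟩
  | _, _, .appR _ h, _, _, hf => by
      obtain ⟨C1, C2, rfl, rfl, h2⟩ := fill1_eq_app hf
      obtain ⟨C2', rfl, hs⟩ := step_transport hSucc h h2
      exact ⟨.app C1 C2', rfl, fun t => .appR _ (hs t)⟩
  | _, _, .lam h, _, _, hf => by
      obtain ⟨C1, rfl, h1⟩ := fill1_eq_lam hf
      obtain ⟨C1', rfl, hs⟩ := step_transport hSucc h h1
      exact ⟨.lam C1', rfl, fun t => .lam (hs t.lift)⟩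

theorem steps_transport (hSucc : ∀ γ < α, SuccTransport S γ) :
    ∀ {u v : Tm S.C}, Steps S α u v → ∀ {x : ℕ} {Cx : Tm (Fin 1 ⊕ S.C)},
      fill1 Cx (.var x) = u →
      ∃ Cx', v = fill1 Cx' (.var x) ∧ ∀ t, Steps S α (fill1 Cx t) (fill1 Cx' t)
  | _, _, .refl _ _, _, Cx, rfl => ⟨Cx, rfl, fun _ => .refl _ _⟩
  | _, _, .tail hs h, _, _, hf =>
      let ⟨_, hm, hsm⟩ := steps_transport hSucc hs hf
      let ⟨Cv, hv, hsv⟩ := step_transport hSucc h hm.symm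
      ⟨Cv, hv, fun t => .tail (hsm t) (hsv t)⟩

theorem lead_transport (hSucc : ∀ γ < α, SuccTransport S γ) {x : ℕ}
    {Cx : Tm (Fin 1 ⊕ S.C)} {ρ : Tm S.C} (h : LeadLt S α (fill1 Cx (.var x)) ρ) (t : Tm S.C) :
    LeadLt S α (fill1 Cx t) ρ := by
  obtain ⟨hγ, ⟨hsteps, hρ⟩⟩ := h
  obtain ⟨Cx', rfl, hs⟩ := steps_transport (fun δ hδ => hSucc δ (hδ.trans hγ)) hsteps rfl
  exact ⟨hγ, ⟨hs t, hSucc _ hγ x Cx' ρ hρ t⟩⟩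

theorem lead_transport_app (hSucc : ∀ γ < α, SuccTransport S γ) {x : ℕ}
    {Cx : Tm (Fin 1 ⊕ S.C)} {u ρ : Tm S.C} (h : LeadLt S α (.app (fill1 Cx (.var x)) u) ρ)
    (t : Tm S.C) : LeadLt S α (.app (fill1 Cx t) u) ρ := by
  simpa using lead_transport hSucc (Cx := .app Cx (embedC u)) (by simpa using h) t

theorem sim_transport (hSucc : ∀ γ < α, SuccTransport S γ) (hSim : ∀ γ < α, SimTransport S γ) :
    SimTransport S α := by
  intro x Cx τ h t
  generalize hu : fill1 Cx (.var x) = u at h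
  cases h with
  | ofA _ b =>
      rw [fill1_eq_const hu]
      exact .ofA _ b
  | ofH _ =>
      rw [fill1_eq_of_closedAt (Nat.zero_le x)
        (by rw [hu]; simp [ClosedAt, CanSys.Hterm, CanSys.LT]), hu]
      exact .ofH _
  | ofKom h =>
      obtain ⟨C0, rfl, hs⟩ := fill1_eq_Kt hu
      rw [hs]
      exact .ofKom (lead_transport hSucc h t)
  | ofKeps h =>
      obtain ⟨C0, rfl, hs⟩ := fill1_eq_Kt hu
      rw [hs]
      exact .ofKeps (lead_transport hSucc h t)
  | ofF hγ1 hγ2 h1 h2 =>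
      obtain ⟨C1, C2, rfl, hs, rfl | ⟨rfl, -⟩⟩ := fill1_eq_Ft hu
      · rw [hs]
        exact .ofF hγ1 hγ2 (hSim _ hγ1 x C1 _ h1 t) (hSim _ hγ2 x C2 _ h2 t)
      · exact absurd h2 (not_sim_var S)
  | ofFom hγ h1 =>
      obtain ⟨C1, C2, rfl, hs, -⟩ := fill1_eq_Ft hu
      rw [hs]
      exact .ofFom hγ (hSim _ hγ x C1 _ h1 t)

theorem succ_transport (hSucc : ∀ γ < α, SuccTransport S γ) (hSim : SimTransport S α) :
    SuccTransport S α := by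
  intro x Cx ρ h t
  generalize hu : fill1 Cx (.var x) = u at h
  have of_closed : ClosedAt 0 u → fill1 Cx t = u := fun hcl => by
    rw [fill1_eq_of_closedAt (Nat.zero_le x) (hu ▸ hcl), hu]
  cases h with
  | refl hτ hρ =>
      rw [of_closed (closedAt_of_mem_TT S hτ hρ 0)]
      exact .refl hτ hρ _
  | fn hρ h => exact .fn hρ fun t1 ht1 => lead_transport_app hSucc (hu ▸ h t1 ht1) t
  | topLA _ b =>
      rw [of_closed ⟨trivial, trivial⟩]
      exact .topLA _ b
  | topLH _ =>
      rw [of_closed (by simp [ClosedAt, CanSys.Hterm, CanSys.LT])]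
      exact .topLH _
  | topA hc _ =>
      rw [of_closed ⟨trivial, closedAt_of_mem_TT S (by nofun) hc 0⟩]
      exact .topA hc _
  | @topH c hc _ =>
      have hc' : c ∈ S.TT .o := by rw [S.TT_o]; exact hc
      rw [of_closed ⟨trivial, (closedAt_of_mem_TT S (by nofun) hc' 0).lift⟩]
      exact .topH hc _
  | xiTop hα h1 h2 =>
      obtain ⟨C1, C2, rfl, rfl, hs⟩ := fill1_eq_xi hu
      rw [hs]
      exact .xiTop hα (hSim x C1 _ h1 t) fun t3 ht3 => lead_transport_app hSucc (h2 t3 ht3) t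
  | xiHTop hα h1 h2 =>
      obtain ⟨C0, h0, hs⟩ := fill1_eq_Ht hu
      obtain ⟨C1, C2, rfl, rfl, hs0⟩ := fill1_eq_xi h0
      rw [hs, hs0]
      refine .xiHTop hα (hSim x C1 _ h1 t) fun t3 ht3 => ?_
      have := lead_transport hSucc (Cx := S.HtCtx (.app C2 (embedC t3)))
        (by simpa [fill1_HtCtx] using h2 t3 ht3) t
      simpa [fill1_HtCtx] using this
  | flTopEps hα h1 =>
      obtain ⟨CF, hF, hs⟩ := fill1_eq_const_app hu
      obtain ⟨C1, C2, rfl, hs', -⟩ := fill1_eq_Ft hF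
      rw [hs, hs']
      exact .flTopEps hα (hSim x C1 _ h1 t)
  | flTop hα hτ h1 h2 =>
      obtain ⟨CF, hF, hs⟩ := fill1_eq_const_app hu
      obtain ⟨C1, C2, rfl, hs', rfl | ⟨rfl, hη⟩⟩ := fill1_eq_Ft hF
      · rw [hs, hs']
        exact .flTop hα hτ (hSim x C1 _ h1 t)
          (lead_transport hSucc (Cx := .app (.const (.inr S.cL)) C2) h2 t)
      · rw [hs, hs']
        refine .flTop hα hτ (hSim x C1 _ h1 t) (LeadLt.head (fun γ => .appR _ (hη t γ)) ?_)
        exact lead_transport hSucc (Cx := .app (.const (.inr S.cL)) (.const (.inl 0))) h2 t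
  | hiTop hα h1 =>
      obtain ⟨C0, rfl, hs⟩ := fill1_eq_Ht hu
      rw [hs]
      exact .hiTop hα (lead_transport hSucc h1 t)
  | xiBot hα hγ hH h1 h3 hb =>
      obtain ⟨C1, C2, rfl, rfl, hs⟩ := fill1_eq_xi hu
      rw [hs]
      refine .xiBot hα hγ ?_ (hSim x C1 _ h1 t) h3 (lead_transport_app hSucc hb t)
      have := hSucc _ hγ x (S.HtCtx Cx) _ (by rwa [fill1_HtCtx, hu]) t
      rwa [fill1_HtCtx, hs] at this

variable (S) in
theorem succ_transport_and_sim_transport (α : Ordinal.{0}) :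
    SuccTransport S α ∧ SimTransport S α := by
  induction α using WellFoundedLT.induction with
  | _ α IH =>
    have hSim := sim_transport (fun γ hγ => (IH γ hγ).1) (fun γ hγ => (IH γ hγ).2)
    exact ⟨succ_transport (fun γ hγ => (IH γ hγ).1) hSim, hSim⟩

end Transport

/-- **Lemma 4.8.**  For a variable `x`, a (unary) context `Cx` and an ordinal `α`:
(1) if `Cx[x] ↠_{≤α} t'` then `t' ≡ Cx'[x]` for some context `Cx'` with
`Cx[t''] ↠_{≤α} Cx'[t'']` for every `t''`; (2) if `Cx[x] ≻_α ρ` then `Cx[t] ≻_α ρ`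
for every `t`; (3) if `Cx[x] ∼_α τ` then `Cx[t] ∼_α τ` for every `t`. -/
theorem context_var_lemma {B : Type} [Finite B] {D : B → Type} (hD : ∀ b, Nonempty (D b))
    (S : CanSys B D) (α : Ordinal.{0}) (x : Nat) (Cx : Tm (Fin 1 ⊕ S.C)) :
    -- (1)
    (∀ t' : Tm S.C, Steps S α (fill1 Cx (.var x)) t' →
        ∃ Cx' : Tm (Fin 1 ⊕ S.C), t' = fill1 Cx' (.var x) ∧
          ∀ t'' : Tm S.C, Steps S α (fill1 Cx t'') (fill1 Cx' t'')) ∧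
    -- (2)
    (∀ ρ : Tm S.C, Succ S α (fill1 Cx (.var x)) ρ →
        ∀ t : Tm S.C, Succ S α (fill1 Cx t) ρ) ∧
    -- (3)
    (∀ τ : ETy B, Sim S α (fill1 Cx (.var x)) τ →
        ∀ t : Tm S.C, Sim S α (fill1 Cx t) τ) :=
  ⟨fun _ h => steps_transport (fun γ _ => (succ_transport_and_sim_transport S γ).1) h rfl,
    fun ρ h => (succ_transport_and_sim_transport S α).1 x Cx ρ h,
    fun τ h => (succ_transport_and_sim_transport S α).2 x Cx τ h⟩

end ILM
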